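/- With Cover's weights W as above, the enumerative decoding map x ↦ N(x) = ∑_j x_j W(x_1,…,x_{j-1},0) is a bijection from S onto {0, 1, …, |S|-1}, and the greedy encoding algorithm (at step j set x_j = 1 and subtract W(p) iff N ≥ W(p)) recovers the unique x ∈ S with index N. -/

import Mathlib

open Finset

/-- `y` strictly precedes `x` in lexicographic order on `{0,1}^nt`. -/
def LexLt (nt : ℕ) (y x : Fin nt → Fin 2) : Prop :=
  ∃ j : Fin nt, (y j : ℕ) < (x j : ℕ) ∧ ∀ i : Fin nt, i < j → y i = x i

instance (nt : ℕ) (y x : Fin nt → Fin 2) : Decidable (LexLt nt y x) := by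
  unfold LexLt; infer_instance

/-- Lexicographic index of `x` within `S`. -/
def coverIdx (nt : ℕ) (S : Finset (Fin nt → Fin 2)) (x : Fin nt → Fin 2) : ℕ :=
  (S.filter (fun y => LexLt nt y x)).card

/-- Cover's weight: the number of elements of `S` whose first `j` coordinates are
`(x_1, …, x_{j-1}, 0)`. -/
def coverW (nt : ℕ) (S : Finset (Fin nt → Fin 2)) (x : Fin nt → Fin 2) (j : Fin nt) : ℕ :=
  (S.filter (fun y => (∀ i : Fin nt, i < j → y i = x i) ∧ y j = 0)).card

lemma lexLt_irrefl (nt : ℕ) (x : Fin nt → Fin 2) : ¬ LexLt nt x x := by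
  rintro ⟨j, hj, -⟩; exact lt_irrefl _ hj

lemma lexLt_trans {nt : ℕ} {y x z : Fin nt → Fin 2}
    (h1 : LexLt nt y x) (h2 : LexLt nt x z) : LexLt nt y z := by
  obtain ⟨j, hj, ha⟩ := h1
  obtain ⟨k, hk, hb⟩ := h2
  rcases lt_trichotomy j k with h | h | h
  · exact ⟨j, by rw [← hb j h]; exact hj,
      fun i hi => (ha i hi).trans (hb i (hi.trans h))⟩
  · subst h
    exact ⟨j, hj.trans hk, fun i hi => (ha i hi).trans (hb i hi)⟩
  · refine ⟨k, ?_, fun i hi => (ha i (hi.trans h)).trans (hb i hi)⟩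
    rw [ha k h]; exact hk

lemma lexLt_total {nt : ℕ} {x y : Fin nt → Fin 2} (h : x ≠ y) :
    LexLt nt x y ∨ LexLt nt y x := by
  have hne : (Finset.univ.filter (fun j : Fin nt => x j ≠ y j)).Nonempty := by
    by_contra hc
    rw [Finset.not_nonempty_iff_eq_empty, Finset.filter_eq_empty_iff] at hc
    exact h (funext fun j => by have := hc (Finset.mem_univ j); simpa using this)
  obtain ⟨j0, hj0⟩ := hne
  set T := Finset.univ.filter (fun j : Fin nt => x j ≠ y j) with hT
  have hTne : T.Nonempty := ⟨j0, hj0⟩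
  set j := T.min' hTne with hj
  have hjmem : j ∈ T := T.min'_mem hTne
  have hjne : x j ≠ y j := by simpa [hT] using hjmem
  have hagree : ∀ i : Fin nt, i < j → x i = y i := by
    intro i hi
    by_contra hc
    have : i ∈ T := by simpa [hT] using hc
    exact absurd (T.min'_le i this) (not_le.mpr hi)
  have hvne : (x j : ℕ) ≠ (y j : ℕ) := fun hc => hjne (Fin.ext hc)
  rcases lt_or_gt_of_ne hvne with hlt | hgt
  · exact Or.inl ⟨j, hlt, hagree⟩
  · exact Or.inr ⟨j, hgt, fun i hi => (hagree i hi).symm⟩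

/-- The set counted by the `j`-th term of the index sum. -/
lemma card_B {nt : ℕ} (S : Finset (Fin nt → Fin 2)) (x : Fin nt → Fin 2) (j : Fin nt) :
    (S.filter (fun y => ((y j : ℕ) < (x j : ℕ)) ∧ ∀ i : Fin nt, i < j → y i = x i)).card
      = (x j : ℕ) * coverW nt S x j := by
  have h2 : (x j : ℕ) < 2 := (x j).isLt
  rcases (by omega : (x j : ℕ) = 0 ∨ (x j : ℕ) = 1) with h0 | h1
  · rw [h0]
    simp only [Nat.not_lt_zero, zero_mul]
    rw [Finset.card_eq_zero, Finset.filter_eq_empty_iff]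
    intro y _
    simp
  · rw [h1, one_mul, coverW]
    congr 1
    apply Finset.filter_congr
    intro y _
    have hy2 : (y j : ℕ) < 2 := (y j).isLt
    constructor
    · rintro ⟨hlt, hag⟩
      exact ⟨hag, Fin.ext (by omega)⟩
    · rintro ⟨hag, h0⟩
      have : (y j : ℕ) = 0 := by rw [h0]; rfl
      exact ⟨by omega, hag⟩

lemma B_disjoint {nt : ℕ} (S : Finset (Fin nt → Fin 2)) (x : Fin nt → Fin 2)
    {j k : Fin nt} (hjk : j ≠ k) :
    Disjoint
      (S.filter (fun y => ((y j : ℕ) < (x j : ℕ)) ∧ ∀ i : Fin nt, i < j → y i = x i))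
      (S.filter (fun y => ((y k : ℕ) < (x k : ℕ)) ∧ ∀ i : Fin nt, i < k → y i = x i)) := by
  rw [Finset.disjoint_left]
  intro y hy1 hy2
  simp only [Finset.mem_filter] at hy1 hy2
  rcases lt_or_gt_of_ne hjk with h | h
  · have := hy2.2.2 j h
    rw [this] at hy1
    exact lt_irrefl _ hy1.2.1
  · have := hy1.2.2 k h
    rw [this] at hy2
    exact lt_irrefl _ hy2.2.1

/-- Key identity: the lexicographic index equals the weighted sum of Cover's weights. -/
lemma coverIdx_eq_sum (nt : ℕ) (S : Finset (Fin nt → Fin 2)) (x : Fin nt → Fin 2) :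
    coverIdx nt S x = ∑ j : Fin nt, (x j : ℕ) * coverW nt S x j := by
  have hset : S.filter (fun y => LexLt nt y x) =
      Finset.univ.biUnion (fun j : Fin nt =>
        S.filter (fun y => ((y j : ℕ) < (x j : ℕ)) ∧ ∀ i : Fin nt, i < j → y i = x i)) := by
    ext y
    rw [Finset.mem_filter]; simp only [Finset.mem_filter, Finset.mem_biUnion, Finset.mem_univ, true_and, LexLt]
    constructor
    · rintro ⟨hyS, j, hj, hag⟩; exact ⟨j, hyS, hj, hag⟩
    · rintro ⟨j, hyS, hj, hag⟩; exact ⟨hyS, j, hj, hag⟩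
  rw [coverIdx, hset, Finset.card_biUnion (fun j _ k _ hjk => B_disjoint S x hjk)]
  exact Finset.sum_congr rfl fun j _ => card_B S x j

/-- Greedy bound: if `x ∈ S` and `x j = 0`, the remaining contributions are `< W j`. -/
lemma greedy_lt {nt : ℕ} {S : Finset (Fin nt → Fin 2)} {x : Fin nt → Fin 2}
    (hx : x ∈ S) {j : Fin nt} (hj : x j = 0) :
    ∑ i ∈ Finset.univ.filter (fun i => j < i), (x i : ℕ) * coverW nt S x i
      < coverW nt S x j := by
  set A := fun i : Fin nt =>
    S.filter (fun y => ((y i : ℕ) < (x i : ℕ)) ∧ ∀ k : Fin nt, k < i → y k = x k) with hA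
  have hsum : ∑ i ∈ Finset.univ.filter (fun i => j < i), (x i : ℕ) * coverW nt S x i
      = ((Finset.univ.filter (fun i => j < i)).biUnion A).card := by
    rw [Finset.card_biUnion (fun a _ b _ hab => B_disjoint S x hab)]
    exact (Finset.sum_congr rfl fun i _ => (card_B S x i).symm)
  rw [hsum]
  have hWset : coverW nt S x j =
      (S.filter (fun y => (∀ i : Fin nt, i < j → y i = x i) ∧ y j = 0)).card := rfl
  set Wj := S.filter (fun y => (∀ i : Fin nt, i < j → y i = x i) ∧ y j = 0) with hWj
  have hxW : x ∈ Wj := by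
    rw [hWj, Finset.mem_filter]
    exact ⟨hx, fun i _ => rfl, hj⟩
  have hsub : (Finset.univ.filter (fun i => j < i)).biUnion A ⊆ Wj.erase x := by
    intro y hy
    rw [Finset.mem_biUnion] at hy
    obtain ⟨i, hi, hyA⟩ := hy
    rw [Finset.mem_filter] at hi
    rw [hA, Finset.mem_filter] at hyA
    obtain ⟨hyS, hlt, hag⟩ := hyA
    rw [Finset.mem_erase]
    constructor
    · intro hxy
      rw [hxy] at hlt
      exact lt_irrefl _ hlt
    · rw [hWj, Finset.mem_filter]
      refine ⟨hyS, fun k hk => hag k (hk.trans hi.2), ?_⟩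
      rw [hag j hi.2, hj]
  calc ((Finset.univ.filter (fun i => j < i)).biUnion A).card
      ≤ (Wj.erase x).card := Finset.card_le_card hsub
    _ < Wj.card := Finset.card_erase_lt_of_mem hxW

lemma coverIdx_lt_of_lexLt {nt : ℕ} {S : Finset (Fin nt → Fin 2)}
    {x x' : Fin nt → Fin 2} (hx : x ∈ S) (h : LexLt nt x x') :
    coverIdx nt S x < coverIdx nt S x' := by
  apply Finset.card_lt_card
  rw [Finset.ssubset_iff_of_subset]
  · exact ⟨x, Finset.mem_filter.mpr ⟨hx, h⟩,
      fun hc => lexLt_irrefl nt x (Finset.mem_filter.mp hc).2⟩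
  · intro y hy
    rw [Finset.mem_filter] at hy ⊢
    exact ⟨hy.1, lexLt_trans hy.2 h⟩

/-- Cover's enumerative coding is a bijection from `S` onto `{0, …, |S|-1}`, and the
greedy decoding rule (set `x_j = 1` and subtract `W(p)` iff the remaining index is
`≥ W(p)`) recovers the unique element with a given index. -/
theorem cover_enumerative_coding_correct
    (nt : ℕ) (S : Finset (Fin nt → Fin 2)) :
    Set.BijOn (coverIdx nt S) ↑S (Set.Iio S.card) ∧
    ∀ x ∈ S, ∀ j : Fin nt,
      (x j = 1 ↔
        coverW nt S x j ≤
          coverIdx nt S x - ∑ i ∈ Finset.univ.filter (· < j), (x i : ℕ) * coverW nt S x i) := by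
  have hmaps : ∀ x ∈ S, coverIdx nt S x < S.card := by
    intro x hx
    apply Finset.card_lt_card
    rw [Finset.ssubset_iff_of_subset (Finset.filter_subset _ _)]
    exact ⟨x, hx, fun hc => lexLt_irrefl nt x (Finset.mem_filter.mp hc).2⟩
  have hinj : Set.InjOn (coverIdx nt S) ↑S := by
    intro x hx x' hx' heq
    by_contra hne
    rcases lexLt_total hne with h | h
    · exact absurd heq (Nat.ne_of_lt (coverIdx_lt_of_lexLt hx h))
    · exact absurd heq.symm (Nat.ne_of_lt (coverIdx_lt_of_lexLt hx' h))
  constructor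
  · refine ⟨fun x hx => hmaps x hx, hinj, ?_⟩
    -- surjectivity
    intro n hn
    have himg : S.image (coverIdx nt S) ⊆ Finset.range S.card := by
      intro m hm
      rw [Finset.mem_image] at hm
      obtain ⟨x, hx, rfl⟩ := hm
      exact Finset.mem_range.mpr (hmaps x hx)
    have hcard : (S.image (coverIdx nt S)).card = S.card :=
      Finset.card_image_of_injOn hinj
    have : Finset.range S.card = S.image (coverIdx nt S) :=
      (Finset.eq_of_subset_of_card_le himg (by rw [hcard, Finset.card_range])).symm
    have hn' : n ∈ Finset.range S.card := Finset.mem_range.mpr hn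
    rw [this, Finset.mem_image] at hn'
    obtain ⟨x, hx, hxn⟩ := hn'
    exact ⟨x, hx, hxn⟩
  · intro x hx j
    set f := fun i : Fin nt => (x i : ℕ) * coverW nt S x i with hf
    have hsplit : coverIdx nt S x
        = (∑ i ∈ Finset.univ.filter (· < j), f i)
          + ∑ i ∈ Finset.univ.filter (fun i => ¬ i < j), f i := by
      rw [coverIdx_eq_sum]
      exact (Finset.sum_filter_add_sum_filter_not _ _ _).symm
    have hrem : coverIdx nt S x - ∑ i ∈ Finset.univ.filter (· < j), f i
        = ∑ i ∈ Finset.univ.filter (fun i => ¬ i < j), f i := by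
      rw [hsplit]; omega
    rw [hrem]
    constructor
    · intro h1
      have hjmem : j ∈ Finset.univ.filter (fun i : Fin nt => ¬ i < j) := by
        simp
      have : f j ≤ ∑ i ∈ Finset.univ.filter (fun i => ¬ i < j), f i :=
        Finset.single_le_sum (fun i _ => Nat.zero_le _) hjmem
      calc coverW nt S x j = f j := by rw [hf]; simp [h1]
        _ ≤ _ := this
    · intro hle
      by_contra h1
      have hj0 : x j = 0 := by
        have h2 : (x j : ℕ) < 2 := (x j).isLt
        rcases (by omega : (x j : ℕ) = 0 ∨ (x j : ℕ) = 1) with h0 | hone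
        · exact Fin.ext h0
        · exact absurd (Fin.ext hone : x j = 1) h1
      have hfj : f j = 0 := by rw [hf]; simp [hj0]
      have hfilter : Finset.univ.filter (fun i : Fin nt => ¬ i < j)
          = insert j (Finset.univ.filter (fun i => j < i)) := by
        ext i
        simp only [Finset.mem_filter, Finset.mem_univ, true_and, Finset.mem_insert, not_lt]
        constructor
        · intro h
          rcases eq_or_lt_of_le h with h' | h'
          · exact Or.inl h'.symm
          · exact Or.inr h'
        · rintro (rfl | h)
          · exact le_refl _
          · exact h.le
      rw [hfilter, Finset.sum_insert (by simp), hfj, zero_add] at hle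
      exact absurd hle (not_le.mpr (greedy_lt hx hj0))
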